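/- Every nonempty standard word u admits a factorization u = u_1·u_2·⋯·u_r with u_1 ≥ u_2 ≥ ⋯ ≥ u_r in the lexicographic order, where each u_i is a Lyndon word that is standard with respect to R. -/

import Mathlib

/-!
Adjacent Lyndon factors `x < y` merge into the Lyndon word `xy`. Pushing the letters of `u` from
the right onto a non-increasing Lyndon factorization, and merging the new first factor with the
next one as long as it is smaller, therefore yields a non-increasing factorization into Lyndon
words. Each factor `w` of `u = a w b` is standard: multiplying a relation that expresses `π w`
through larger words of the same length by `π a` on the left and `π b` on the right gives such a
relation for `π u`, because `w < w'` with `|w| = |w'|` implies `a w b < a w' b`.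
-/

noncomputable section

/-- Lexicographic order on words over the ordered alphabet `x_1 < ⋯ < x_n`. -/
def wlt {n : ℕ} (u v : FreeMonoid (Fin n)) : Prop :=
  List.Lex (· < ·) (FreeMonoid.toList u) (FreeMonoid.toList v)

/-- Lyndon word: nonempty and smaller than every rotation `u₂u₁` coming from a
factorization `u = u₁u₂` into nonempty words. -/
def IsLyndon {n : ℕ} (u : FreeMonoid (Fin n)) : Prop :=
  u ≠ 1 ∧ ∀ v w : FreeMonoid (Fin n), v ≠ 1 → w ≠ 1 → u = v * w → wlt u (w * v)

/-- The word `u` viewed as an element of the free algebra `T = F⟨x_1,…,x_n⟩`,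
realized as the monoid algebra of the free monoid on `n` letters. -/
def wordOf (F : Type) [Field F] {n : ℕ} (u : FreeMonoid (Fin n)) :
    MonoidAlgebra F (FreeMonoid (Fin n)) :=
  MonoidAlgebra.of F (FreeMonoid (Fin n)) u

/-- `u` is standard w.r.t. the quotient `π : T → R`:  `π(u)` is not a linear
combination of images of strictly greater words of the same length. -/
def IsStandard (F : Type) [Field F] {n : ℕ} {R : Type} [Ring R] [Algebra F R]
    (π : MonoidAlgebra F (FreeMonoid (Fin n)) →ₐ[F] R) (u : FreeMonoid (Fin n)) : Prop :=
  π (wordOf F u) ∉ Submodule.span F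
    { y : R | ∃ w : FreeMonoid (Fin n),
        FreeMonoid.length w = FreeMonoid.length u ∧ wlt u w ∧ y = π (wordOf F w) }

/-- The kernel of `π` (i.e. the ideal `I`) is homogeneous w.r.t. the length grading:
it contains each length-homogeneous component of each of its elements. -/
def HomogKer (F : Type) [Field F] {n : ℕ} {R : Type} [Ring R] [Algebra F R]
    (π : MonoidAlgebra F (FreeMonoid (Fin n)) →ₐ[F] R) : Prop :=
  ∀ x : MonoidAlgebra F (FreeMonoid (Fin n)), π x = 0 →
    ∀ d : ℕ, π (MonoidAlgebra.ofCoeff (Finsupp.filter (fun w : FreeMonoid (Fin n) => FreeMonoid.length w = d) x.coeff)) = 0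

namespace List

variable {α : Type*} [LinearOrder α]

def IsLyndon (l : List α) : Prop :=
  l ≠ [] ∧ ∀ v w, v ≠ [] → w ≠ [] → l = v ++ w → l < w ++ v

theorem append_lt_append_left_iff {c s t : List α} : c ++ s < c ++ t ↔ s < t := by
  induction c with
  | nil => rfl
  | cons a c ih => simp [ih]

theorem append_lt_append_of_lt_of_not_prefix {s t : List α} (h : s < t) (hst : ¬ s <+: t)
    (X Y : List α) : s ++ X < t ++ Y := by
  induction s generalizing t with
  | nil => exact absurd nil_prefix hst
  | cons a s ih =>
    obtain _ | ⟨b, t⟩ := t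
    · exact absurd h (not_lt_nil _)
    rcases cons_lt_cons_iff.mp h with hab | ⟨rfl, hst'⟩
    · exact Lex.rel hab
    · exact Lex.cons (ih hst' fun hp => hst (cons_prefix_cons.mpr ⟨rfl, hp⟩))

theorem append_lt_append_of_lt_of_length_eq {s t : List α} (h : s < t)
    (hlen : s.length = t.length) (X Y : List α) : s ++ X < t ++ Y :=
  append_lt_append_of_lt_of_not_prefix h (fun hp => lt_irrefl t (hp.eq_of_length hlen ▸ h)) X Y

theorem isLyndon_singleton (a : α) : [a].IsLyndon := by
  refine ⟨cons_ne_nil a [], fun v w hv hw he => absurd (congrArg length he) ?_⟩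
  have := length_pos_iff.mpr hv
  have := length_pos_iff.mpr hw
  simp only [length_singleton, length_append]
  omega

theorem IsLyndon.lt_suffix {l v s : List α} (hl : l.IsLyndon) (hv : v ≠ []) (hs : s ≠ [])
    (he : l = v ++ s) : l < s := by
  have hrot := hl.2 v s hv hs he
  by_cases hp : s <+: l
  · obtain ⟨t, hst⟩ := hp
    have hlen : t.length = v.length := by
      have := congrArg length (hst.trans he)
      simp only [length_append] at this
      omega
    have ht : t ≠ [] := by rintro rfl; simp_all
    -- the rotation `s ++ v` of `l = s ++ t` forces `t < v`, hence `t ++ s < l`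
    have htv : t < v := append_lt_append_left_iff.mp (hst ▸ hrot)
    have := append_lt_append_of_lt_of_length_eq htv hlen s s
    exact absurd (lt_trans (he ▸ this) (hl.2 s t hs ht hst.symm)) (lt_irrefl _)
  · rcases lt_trichotomy l s with h | rfl | h
    · exact h
    · exact absurd (prefix_refl l) hp
    · exact absurd hrot (lt_asymm (by simpa using append_lt_append_of_lt_of_not_prefix h hp v []))

theorem isLyndon_of_forall_lt_suffix {l : List α} (hl : l ≠ [])
    (h : ∀ v s, v ≠ [] → s ≠ [] → l = v ++ s → l < s) : l.IsLyndon := by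
  refine ⟨hl, fun v w hv hw he => ?_⟩
  have hnp : ¬ l <+: w := fun hp => by
    have := hp.length_le
    have := length_pos_iff.mpr hv
    simp only [he, length_append] at *
    omega
  simpa using append_lt_append_of_lt_of_not_prefix (h v w hv hw he) hnp [] v

theorem IsLyndon.append_lt_self {x y : List α} (hy : y.IsLyndon) (hx : x ≠ []) (h : x < y) :
    x ++ y < y := by
  by_cases hp : x <+: y
  · obtain ⟨t, rfl⟩ := hp
    have ht : t ≠ [] := by rintro rfl; simp at h
    exact append_lt_append_left_iff.mpr (hy.lt_suffix hx ht rfl)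
  · simpa using append_lt_append_of_lt_of_not_prefix h hp y []

theorem IsLyndon.append {x y : List α} (hx : x.IsLyndon) (hy : y.IsLyndon) (h : x < y) :
    (x ++ y).IsLyndon := by
  have hxy : x ++ y < y := hy.append_lt_self hx.1 h
  refine isLyndon_of_forall_lt_suffix (by simp [hx.1]) fun v s hv hs he => ?_
  rcases append_eq_append_iff.mp he.symm with ⟨a, rfl, rfl⟩ | ⟨c, rfl, rfl⟩
  · rcases eq_or_ne a [] with rfl | ha
    · simpa using hxy
    · have hnp : ¬ v ++ a <+: a := fun hp => by
        have hle := hp.length_le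
        have := length_pos_iff.mpr hv
        simp only [length_append] at hle
        omega
      simpa using append_lt_append_of_lt_of_not_prefix (hx.lt_suffix hv ha rfl) hnp y y
  · rcases eq_or_ne c [] with rfl | hc
    · simpa using hxy
    · exact lt_trans hxy (hy.lt_suffix hc hs rfl)

def lyndonPush : List α → List (List α) → List (List α)
  | x, [] => [x]
  | x, y :: L => if x < y then lyndonPush (x ++ y) L else x :: y :: L

def lyndonFactorization : List α → List (List α)
  | [] => []
  | a :: l => lyndonPush [a] (lyndonFactorization l)

theorem lyndonPush_ne_nil (x : List α) (L : List (List α)) : lyndonPush x L ≠ [] := by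
  induction L generalizing x with
  | nil => simp [lyndonPush]
  | cons y L ih => unfold lyndonPush; split_ifs <;> simp [ih]

theorem flatten_lyndonPush (x : List α) (L : List (List α)) :
    (lyndonPush x L).flatten = x ++ L.flatten := by
  induction L generalizing x with
  | nil => simp [lyndonPush]
  | cons y L ih => unfold lyndonPush; split_ifs <;> simp [ih]

theorem isLyndon_of_mem_lyndonPush {x : List α} {L : List (List α)} (hx : x.IsLyndon)
    (hL : ∀ m ∈ L, m.IsLyndon) : ∀ m ∈ lyndonPush x L, m.IsLyndon := by
  induction L generalizing x with
  | nil => simpa [lyndonPush] using hx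
  | cons y L ih =>
    unfold lyndonPush
    split_ifs with h
    · exact ih (hx.append (hL y mem_cons_self) h) fun m hm => hL m (mem_cons_of_mem y hm)
    · simpa [hx] using hL

theorem isChain_lyndonPush (x : List α) {L : List (List α)} (hL : L.IsChain (· ≥ ·)) :
    (lyndonPush x L).IsChain (· ≥ ·) := by
  induction L generalizing x with
  | nil => simp [lyndonPush]
  | cons y L ih =>
    unfold lyndonPush
    split_ifs with h
    · exact ih (x ++ y) hL.tail
    · exact isChain_cons_cons.mpr ⟨not_lt.mp h, hL⟩

theorem lyndonFactorization_ne_nil {l : List α} (hl : l ≠ []) : lyndonFactorization l ≠ [] := by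
  obtain ⟨a, l, rfl⟩ := exists_cons_of_ne_nil hl
  exact lyndonPush_ne_nil _ _

theorem flatten_lyndonFactorization (l : List α) : (lyndonFactorization l).flatten = l := by
  induction l with
  | nil => rfl
  | cons a l ih => simp [lyndonFactorization, flatten_lyndonPush, ih]

theorem isLyndon_of_mem_lyndonFactorization {l : List α} :
    ∀ m ∈ lyndonFactorization l, m.IsLyndon := by
  induction l with
  | nil => simp [lyndonFactorization]
  | cons a l ih => exact isLyndon_of_mem_lyndonPush (isLyndon_singleton a) ih

theorem isChain_lyndonFactorization (l : List α) :
    (lyndonFactorization l).IsChain (· ≥ ·) := by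
  induction l with
  | nil => exact isChain_nil
  | cons a l ih => exact isChain_lyndonPush _ ih

end List

theorem FreeMonoid.toList_ne_nil {α : Type*} {x : FreeMonoid α} (h : x ≠ 1) : x.toList ≠ [] :=
  FreeMonoid.toList.injective.ne h

theorem wlt_iff_toList_lt {n : ℕ} {u v : FreeMonoid (Fin n)} : wlt u v ↔ u.toList < v.toList :=
  Iff.rfl

theorem wlt_mul_mul {n : ℕ} {x w : FreeMonoid (Fin n)} (h : wlt x w) (hlen : x.length = w.length)
    (a b : FreeMonoid (Fin n)) : wlt (a * x * b) (a * w * b) := by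
  simpa [wlt_iff_toList_lt, List.append_lt_append_left_iff] using
    List.append_lt_append_of_lt_of_length_eq h hlen b.toList b.toList

theorem isLyndon_ofList {n : ℕ} {l : List (Fin n)} (h : l.IsLyndon) :
    IsLyndon (FreeMonoid.ofList l) :=
  ⟨fun h1 => h.1 (congrArg FreeMonoid.toList h1), fun v w hv hw he =>
    h.2 v.toList w.toList (FreeMonoid.toList_ne_nil hv) (FreeMonoid.toList_ne_nil hw)
      (congrArg FreeMonoid.toList he)⟩

theorem wordOf_mul (F : Type) [Field F] {n : ℕ} (u v : FreeMonoid (Fin n)) :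
    wordOf F (u * v) = wordOf F u * wordOf F v :=
  map_mul _ u v

section Standard

variable {F : Type} [Field F] {n : ℕ} {R : Type} [Ring R] [Algebra F R]
  {π : MonoidAlgebra F (FreeMonoid (Fin n)) →ₐ[F] R}

theorem IsStandard.of_mul_mul {a x b : FreeMonoid (Fin n)} (h : IsStandard F π (a * x * b)) :
    IsStandard F π x := by
  intro hx
  apply h
  let f := LinearMap.mulLeftRight F (π (wordOf F a), π (wordOf F b))
  have hf : ∀ w, f (π (wordOf F w)) = π (wordOf F (a * w * b)) := fun w => by
    simp [f, wordOf_mul]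
  rw [← hf]
  refine Submodule.mem_comap.mp ((Submodule.span_le.mpr ?_ : _ ≤ Submodule.comap f _) hx)
  rintro _ ⟨w, hlen, hlt, rfl⟩
  refine Submodule.subset_span ⟨a * w * b, ?_, wlt_mul_mul hlt hlen.symm a b, hf w⟩
  simp [hlen]

theorem IsStandard.of_mem {L : List (FreeMonoid (Fin n))} {w : FreeMonoid (Fin n)}
    (h : IsStandard F π L.prod) (hw : w ∈ L) : IsStandard F π w := by
  obtain ⟨s, t, rfl⟩ := List.append_of_mem hw
  rw [List.prod_append, List.prod_cons, ← mul_assoc] at h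
  exact h.of_mul_mul

end Standard

theorem stmt_8_general (F : Type) [Field F] (n : ℕ)
    (R : Type) [Ring R] [Algebra F R]
    (π : MonoidAlgebra F (FreeMonoid (Fin n)) →ₐ[F] R)
    (u : FreeMonoid (Fin n)) (hune : u ≠ 1) (hu : IsStandard F π u) :
    ∃ L : List (FreeMonoid (Fin n)), L ≠ [] ∧ L.prod = u ∧
      (∀ w ∈ L, IsLyndon w ∧ IsStandard F π w) ∧
      L.Chain' (fun x y => wlt y x ∨ y = x) := by
  set M := List.lyndonFactorization u.toList
  have hprod : (M.map FreeMonoid.ofList).prod = u := by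
    apply FreeMonoid.toList.injective
    simp [FreeMonoid.toList_prod, List.map_map, M, List.flatten_lyndonFactorization]
  refine ⟨M.map FreeMonoid.ofList, ?_, hprod, ?_, ?_⟩
  · simpa [M] using List.lyndonFactorization_ne_nil (FreeMonoid.toList_ne_nil hune)
  · intro w hw
    obtain ⟨m, hm, rfl⟩ := List.mem_map.mp hw
    exact ⟨isLyndon_ofList (List.isLyndon_of_mem_lyndonFactorization m hm),
      (hprod ▸ hu : IsStandard F π _).of_mem hw⟩
  · refine (List.isChain_map _).mpr ((List.isChain_lyndonFactorization _).imp fun x y hxy => ?_)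
    exact (le_iff_lt_or_eq.mp hxy).imp id (congrArg FreeMonoid.ofList)

/-- every nonempty standard word is a non-increasing product of
standard Lyndon words. -/
theorem stmt_8 (F : Type) [Field F] [CharZero F] (n : ℕ) (hn : 1 ≤ n)
    (R : Type) [Ring R] [Algebra F R]
    (π : MonoidAlgebra F (FreeMonoid (Fin n)) →ₐ[F] R)
    (hπ : Function.Surjective π) (hI : HomogKer F π)
    (u : FreeMonoid (Fin n)) (hune : u ≠ 1) (hu : IsStandard F π u) :
    ∃ L : List (FreeMonoid (Fin n)), L ≠ [] ∧ L.prod = u ∧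
      (∀ w ∈ L, IsLyndon w ∧ IsStandard F π w) ∧
      L.Chain' (fun x y => wlt y x ∨ y = x) :=
  stmt_8_general F n R π u hune hu

end
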